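/- arXiv:2112.10858 — 5 statements merged into one kernel-verified Lean document; each statement's English description precedes it below -/
import Mathlib

section
/- Let ε₁,…,εₙ be independent real random variables and let f,g : ℝⁿ → ℝ be bounded measurable functions that are non-decreasing in each coordinate. Then Cov(f(ε₁,…,εₙ), g(ε₁,…,εₙ)) ≥ 0. -/
open MeasureTheory ProbabilityTheory Filter Set

/-- Tail probability `P(X > x)` as a real number. -/
noncomputable def tailP {Ω : Type*} [MeasurableSpace Ω] (μ : Measure Ω) (X : Ω → ℝ) (x : ℝ) : ℝ :=
  (μ {ω | x < X ω}).toReal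

/-- `L` is slowly varying: `L(αx)/L(x) → 1` as `x → ∞`, for every `α > 0`. -/
def SlowlyVarying (L : ℝ → ℝ) : Prop :=
  ∀ α : ℝ, 0 < α → Tendsto (fun x => L (α * x) / L x) atTop (nhds 1)

/-- `X` is regularly varying with tail index `θ`: `P(X > x) = x^{-θ} L(x)` with `L` slowly varying. -/
def RegVarying {Ω : Type*} [MeasurableSpace Ω] (μ : Measure Ω) (X : Ω → ℝ) (θ : ℝ) : Prop :=
  ∃ L : ℝ → ℝ, SlowlyVarying L ∧ ∀ x : ℝ, 0 < x → tailP μ X x = x ^ (-θ) * L x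

/-- Conditional probability `P(A | B)` as a real number. -/
noncomputable def condP {Ω : Type*} [MeasurableSpace Ω] (μ : Measure Ω) (A B : Set Ω) : ℝ :=
  (μ (A ∩ B)).toReal / (μ B).toReal

/-- Conditional expectation `E[g | B]` as a real number. -/
noncomputable def condE {Ω : Type*} [MeasurableSpace Ω] (μ : Measure Ω) (B : Set Ω) (g : Ω → ℝ) : ℝ :=
  (∫ ω in B, g ω ∂μ) / (μ B).toReal

/-- Cumulative distribution function of `X`. -/
noncomputable def cdfR {Ω : Type*} [MeasurableSpace Ω] (μ : Measure Ω) (X : Ω → ℝ) (t : ℝ) : ℝ :=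
  (μ {ω | X ω ≤ t}).toReal

/-! Harris' inequality. Call a probability measure on a preorder associated when bounded measurable
monotone functions are non-negatively correlated under it. On a linear order every probability
measure is associated (Chebyshev: `(f x - f y) * (g x - g y) ≥ 0`, integrated against `μ ⊗ μ`).
Association is preserved by pushforward along monotone maps and by products: by Fubini, the
partial integrals `t ↦ ∫ f (t, y) dν` are again bounded, measurable and monotone, and the
conditional correlation is non-negative for each `t`. By induction, finite products of measures
on linear orders are associated, and the joint law of independent real random variables is such a
product. -/

section Association

variable {β : Type*} [MeasurableSpace β]

lemma Measurable.integrable_of_abs_le {μ : Measure β} [IsFiniteMeasure μ] {f : β → ℝ}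
    (hf : Measurable f) {C : ℝ} (hC : ∀ x, |f x| ≤ C) : Integrable f μ :=
  .of_bound hf.aestronglyMeasurable C (ae_of_all _ hC)

lemma abs_mul_le_of_abs_le {a b C D : ℝ} (ha : |a| ≤ C) (hb : |b| ≤ D) : |a * b| ≤ C * D := by
  rw [abs_mul]
  exact mul_le_mul ha hb (abs_nonneg _) ((abs_nonneg _).trans ha)

lemma abs_integral_le_of_forall_abs_le {μ : Measure β} [IsProbabilityMeasure μ] {f : β → ℝ}
    {C : ℝ} (hC : ∀ x, |f x| ≤ C) : |∫ x, f x ∂μ| ≤ C := by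
  simpa using norm_integral_le_of_norm_le_const (μ := μ) (f := f) (C := C) (ae_of_all _ hC)

def IsAssociated [Preorder β] (μ : Measure β) : Prop :=
  ∀ ⦃f g : β → ℝ⦄, Measurable f → Measurable g → (∃ C, ∀ x, |f x| ≤ C) →
    (∃ C, ∀ x, |g x| ≤ C) → Monotone f → Monotone g →
    (∫ x, f x ∂μ) * (∫ x, g x ∂μ) ≤ ∫ x, f x * g x ∂μ

theorem integral_mul_integral_le_integral_mul_of_monotone [LinearOrder β] (μ : Measure β)
    [IsProbabilityMeasure μ] {f g : β → ℝ} (hf : Integrable f μ) (hg : Integrable g μ)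
    (hfg : Integrable (f * g) μ) (hfm : Monotone f) (hgm : Monotone g) :
    (∫ x, f x ∂μ) * (∫ x, g x ∂μ) ≤ ∫ x, f x * g x ∂μ := by
  have I₁ := hfg.comp_fst μ
  have I₂ := hfg.comp_snd μ
  have I₃ := hf.mul_prod hg
  have I₄ := hg.mul_prod hf
  have I₁₂ : Integrable (fun z : β × β => (f * g) z.1 + (f * g) z.2) (μ.prod μ) := I₁.add I₂
  have I₃₄ : Integrable (fun z : β × β => f z.1 * g z.2 + g z.1 * f z.2) (μ.prod μ) := I₃.add I₄
  have hnonneg : 0 ≤ ∫ z, (f z.1 - f z.2) * (g z.1 - g z.2) ∂μ.prod μ :=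
    integral_nonneg fun z => (hfm.monovary hgm).sub_mul_sub_nonneg z.2 z.1
  have expand : (fun z : β × β => (f z.1 - f z.2) * (g z.1 - g z.2)) =
      fun z => ((f * g) z.1 + (f * g) z.2) - (f z.1 * g z.2 + g z.1 * f z.2) := by
    ext z; simp only [Pi.mul_apply]; ring
  rw [expand, integral_sub I₁₂ I₃₄, integral_add I₁ I₂, integral_add I₃ I₄,
    integral_fun_fst, integral_fun_snd, integral_prod_mul, integral_prod_mul] at hnonneg
  simp only [probReal_univ, one_smul, Pi.mul_apply] at hnonneg
  linarith

theorem isAssociated_of_linearOrder [LinearOrder β] (μ : Measure β) [IsProbabilityMeasure μ] :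
    IsAssociated μ := by
  rintro f g hf hg ⟨C, hC⟩ ⟨D, hD⟩ hfm hgm
  exact integral_mul_integral_le_integral_mul_of_monotone μ (hf.integrable_of_abs_le hC)
    (hg.integrable_of_abs_le hD)
    ((hf.mul hg).integrable_of_abs_le fun x => abs_mul_le_of_abs_le (hC x) (hD x)) hfm hgm

theorem isAssociated_dirac [Preorder β] (a : β) : IsAssociated (Measure.dirac a) := by
  intro f g hf hg _ _ _ _
  rw [integral_dirac' _ _ hf.stronglyMeasurable, integral_dirac' _ _ hg.stronglyMeasurable,
    integral_dirac' (fun x => f x * g x) _ (hf.mul hg).stronglyMeasurable]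

theorem IsAssociated.map {γ : Type*} [MeasurableSpace γ] [Preorder β] [Preorder γ]
    {μ : Measure β} (hμ : IsAssociated μ) {φ : β → γ} (hφ : Measurable φ) (hφm : Monotone φ) :
    IsAssociated (μ.map φ) := by
  rintro f g hf hg ⟨C, hC⟩ ⟨D, hD⟩ hfm hgm
  rw [integral_map hφ.aemeasurable hf.aestronglyMeasurable,
    integral_map hφ.aemeasurable hg.aestronglyMeasurable,
    integral_map (f := fun x => f x * g x) hφ.aemeasurable (hf.mul hg).aestronglyMeasurable]
  exact hμ (hf.comp hφ) (hg.comp hφ) ⟨C, fun x => hC _⟩ ⟨D, fun x => hD _⟩ (hfm.comp hφm)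
    (hgm.comp hφm)

section Prod

variable {γ : Type*} [MeasurableSpace γ] [Preorder β] [Preorder γ] {ν : Measure γ}

lemma monotone_integral_prod_right [IsFiniteMeasure ν] {F : β × γ → ℝ} (hF : Measurable F)
    {C : ℝ} (hC : ∀ z, |F z| ≤ C) (hFm : Monotone F) : Monotone fun t => ∫ y, F (t, y) ∂ν :=
  have hint (t : β) : Integrable (fun y => F (t, y)) ν :=
    (hF.comp measurable_prodMk_left).integrable_of_abs_le fun _ => hC _
  fun _ _ h => integral_mono (hint _) (hint _) fun _ => hFm (Prod.mk_le_mk.2 ⟨h, le_rfl⟩)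

theorem IsAssociated.prod {μ : Measure β} [IsProbabilityMeasure μ] [IsProbabilityMeasure ν]
    (hμ : IsAssociated μ) (hν : IsAssociated ν) : IsAssociated (μ.prod ν) := by
  rintro f g hf hg ⟨C, hC⟩ ⟨D, hD⟩ hfm hgm
  have hfgC : ∀ z, |f z * g z| ≤ C * D := fun z => abs_mul_le_of_abs_le (hC z) (hD z)
  have Ifg : Integrable (fun z => f z * g z) (μ.prod ν) := (hf.mul hg).integrable_of_abs_le hfgC
  have hΦ := hf.stronglyMeasurable.integral_prod_right' (ν := ν)
  have hΨ := hg.stronglyMeasurable.integral_prod_right' (ν := ν)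
  have hsection : ∀ t, (∫ y, f (t, y) ∂ν) * (∫ y, g (t, y) ∂ν) ≤ ∫ y, f (t, y) * g (t, y) ∂ν :=
    fun t => hν (hf.comp measurable_prodMk_left) (hg.comp measurable_prodMk_left)
      ⟨C, fun _ => hC _⟩ ⟨D, fun _ => hD _⟩ (fun _ _ h => hfm (Prod.mk_le_mk.2 ⟨le_rfl, h⟩))
      (fun _ _ h => hgm (Prod.mk_le_mk.2 ⟨le_rfl, h⟩))
  have hΦC : ∀ t, |∫ y, f (t, y) ∂ν| ≤ C := fun t => abs_integral_le_of_forall_abs_le fun _ => hC _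
  have hΨD : ∀ t, |∫ y, g (t, y) ∂ν| ≤ D := fun t => abs_integral_le_of_forall_abs_le fun _ => hD _
  calc (∫ z, f z ∂μ.prod ν) * (∫ z, g z ∂μ.prod ν)
      = (∫ t, ∫ y, f (t, y) ∂ν ∂μ) * (∫ t, ∫ y, g (t, y) ∂ν ∂μ) := by
        rw [integral_prod f (hf.integrable_of_abs_le hC),
          integral_prod g (hg.integrable_of_abs_le hD)]
    _ ≤ ∫ t, (∫ y, f (t, y) ∂ν) * (∫ y, g (t, y) ∂ν) ∂μ :=
        hμ hΦ.measurable hΨ.measurable ⟨C, hΦC⟩ ⟨D, hΨD⟩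
          (monotone_integral_prod_right hf hC hfm) (monotone_integral_prod_right hg hD hgm)
    _ ≤ ∫ t, ∫ y, f (t, y) * g (t, y) ∂ν ∂μ :=
        integral_mono ((hΦ.measurable.mul hΨ.measurable).integrable_of_abs_le
          fun t => abs_mul_le_of_abs_le (hΦC t) (hΨD t)) Ifg.integral_prod_left hsection
    _ = ∫ z, f z * g z ∂μ.prod ν := (integral_prod _ Ifg).symm

end Prod

theorem monotone_piFinSuccAbove_symm {n : ℕ} (α : Fin (n + 1) → Type*)
    [∀ i, MeasurableSpace (α i)] [∀ i, Preorder (α i)] (i : Fin (n + 1)) :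
    Monotone (MeasurableEquiv.piFinSuccAbove α i).symm := by
  rintro ⟨t, y⟩ ⟨t', y'⟩ ⟨ht, hy⟩
  simp only [MeasurableEquiv.piFinSuccAbove_symm_apply, Fin.insertNthEquiv, Equiv.coe_fn_mk,
    Fin.insertNth_le_iff, Fin.insertNth_apply_same, Fin.insertNth_apply_succAbove]
  exact ⟨ht, hy⟩

theorem isAssociated_pi : ∀ {n : ℕ} {α : Fin n → Type*} [∀ i, MeasurableSpace (α i)]
    [∀ i, Preorder (α i)] {ν : ∀ i, Measure (α i)} [∀ i, IsProbabilityMeasure (ν i)],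
    (∀ i, IsAssociated (ν i)) → IsAssociated (Measure.pi ν)
  | 0, _, _, _, ν, _, _ => by
    rw [Measure.pi_of_empty ν]
    exact isAssociated_dirac _
  | _ + 1, α, _, _, ν, _, h => by
    rw [← ((measurePreserving_piFinSuccAbove ν 0).symm).map_eq]
    exact ((h 0).prod (isAssociated_pi fun _ => h _)).map
      (MeasurableEquiv.piFinSuccAbove α 0).symm.measurable (monotone_piFinSuccAbove_symm α 0)

end Association

/-- Association of independent random variables: coordinatewise non-decreasing
bounded measurable functions of independent random variables are non-negatively correlated. -/
theorem stmt_0 {Ω : Type*} [MeasurableSpace Ω] (μ : Measure Ω) [IsProbabilityMeasure μ]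
    (n : ℕ) (ε : Fin n → Ω → ℝ) (hmeas : ∀ i, Measurable (ε i))
    (hindep : iIndepFun ε μ)
    (f g : (Fin n → ℝ) → ℝ) (hf : Measurable f) (hg : Measurable g)
    (hfb : ∃ C : ℝ, ∀ x, |f x| ≤ C) (hgb : ∃ C : ℝ, ∀ x, |g x| ≤ C)
    (hfm : Monotone f) (hgm : Monotone g) :
    0 ≤ (∫ ω, f (fun i => ε i ω) * g (fun i => ε i ω) ∂μ)
        - (∫ ω, f (fun i => ε i ω) ∂μ) * (∫ ω, g (fun i => ε i ω) ∂μ) := by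
  have hε : Measurable fun ω i => ε i ω := measurable_pi_lambda _ hmeas
  have (i : Fin n) : IsProbabilityMeasure (μ.map (ε i)) :=
    Measure.isProbabilityMeasure_map (hmeas i).aemeasurable
  have hlaw : IsAssociated (μ.map fun ω i => ε i ω) := by
    rw [hindep.map_fun_eq_pi_map fun i => (hmeas i).aemeasurable]
    exact isAssociated_pi fun i => isAssociated_of_linearOrder _
  have h := hlaw hf hg hfb hgb hfm hgm
  rw [integral_map hε.aemeasurable hf.aestronglyMeasurable,
    integral_map hε.aemeasurable hg.aestronglyMeasurable,
    integral_map (f := fun x => f x * g x) hε.aemeasurable (hf.mul hg).aestronglyMeasurable] at h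
  exact sub_nonneg.2 h
end

section
/- Let ε₀,…,εₙ be iid continuous regularly varying random variables with tail index θ > 0, and let a₀,…,aₙ > 0 and b₀,…,bₙ > 0 be strictly positive constants. Then for every λ ∈ ℝ, lim_{u→∞} P(∑_{i=0}^n aᵢεᵢ < λ ∣ ∑_{i=0}^n bᵢεᵢ > u) = 0. -/
open MeasureTheory ProbabilityTheory Filter Set

/-!
On `{∑ bᵢεᵢ > u}` some `εⱼ` exceeds a fixed fraction of `u`, and if also `∑ aᵢεᵢ < λ` then,
all `aᵢ` being positive, some other `εᵢ` lies below a level tending to `-∞`. By independence the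
probability of this is at most a constant times `P(ε > cu) · P(ε ≤ d(u))`, while
`P(∑ bᵢεᵢ > u) ≥ P(ε₀ > u/b₀) · P(ε > 0)ⁿ`. Regular variation makes `P(ε > cu) / P(ε > u/b₀)`
converge, and `P(ε ≤ d(u)) → 0`.
-/

open Topology

lemma SlowlyVarying.eventually_ne_zero {L : ℝ → ℝ} (hL : SlowlyVarying L) :
    ∀ᶠ x in atTop, L x ≠ 0 := by
  filter_upwards [(hL 1 one_pos).eventually_ne one_ne_zero] with x hx hLx
  simp [hLx] at hx

section Tail

variable {Ω : Type*} [MeasurableSpace Ω] {μ : Measure Ω} {X Y : Ω → ℝ} {θ : ℝ}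

lemma antitone_tailP [IsFiniteMeasure μ] : Antitone (tailP μ X) := fun _ _ hxy =>
  measureReal_mono fun _ h => lt_of_le_of_lt hxy h

lemma RegVarying.tailP_pos [IsFiniteMeasure μ] (hX : RegVarying μ X θ) (x : ℝ) :
    0 < tailP μ X x := by
  obtain ⟨L, hL, hform⟩ := hX
  obtain ⟨y, ⟨hxy, hy⟩, hLy⟩ :=
    ((eventually_ge_atTop x).and (eventually_gt_atTop 0)).and hL.eventually_ne_zero |>.exists
  refine (antitone_tailP hxy).trans_lt' (lt_of_le_of_ne ENNReal.toReal_nonneg ?_)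
  rw [hform y hy]
  exact (mul_ne_zero (Real.rpow_pos_of_pos hy _).ne' hLy).symm

lemma RegVarying.tendsto_tailP_mul_div (hX : RegVarying μ X θ) {c : ℝ} (hc : 0 < c) :
    Tendsto (fun x => tailP μ X (c * x) / tailP μ X x) atTop (𝓝 (c ^ (-θ))) := by
  obtain ⟨L, hL, hform⟩ := hX
  have h := (hL c hc).const_mul (c ^ (-θ))
  rw [mul_one] at h
  refine h.congr' ?_
  filter_upwards [eventually_gt_atTop 0] with x hx
  rw [hform x hx, hform (c * x) (mul_pos hc hx), mul_div_mul_comm, Real.mul_rpow hc.le hx.le,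
    mul_div_cancel_right₀ _ (Real.rpow_pos_of_pos hx _).ne']

lemma RegVarying.tendsto_tailP_div_div (hX : RegVarying μ X θ) {c d : ℝ} (hc : 0 < c)
    (hd : 0 < d) :
    Tendsto (fun x => tailP μ X (x / c) / tailP μ X (x / d)) atTop (𝓝 ((d / c) ^ (-θ))) :=
  ((hX.tendsto_tailP_mul_div (div_pos hd hc)).comp (tendsto_id.atTop_div_const hd)).congr
    fun x => by rw [Function.comp_apply, id, div_mul_div_comm, mul_comm d x, mul_div_mul_right _ _ hd.ne']

lemma tendsto_cdfR_atBot [IsProbabilityMeasure μ] (hX : AEMeasurable X μ) :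
    Tendsto (cdfR μ X) atBot (𝓝 0) := by
  have := Measure.isProbabilityMeasure_map hX
  refine (tendsto_cdf_atBot (μ.map X)).congr fun t => ?_
  rw [cdf_eq_real, measureReal_def, Measure.map_apply_of_aemeasurable hX measurableSet_Iic]
  rfl

lemma ProbabilityTheory.IdentDistrib.tailP_eq (h : IdentDistrib X Y μ μ) (x : ℝ) :
    tailP μ X x = tailP μ Y x :=
  congrArg ENNReal.toReal (h.measure_mem_eq measurableSet_Ioi)

lemma ProbabilityTheory.IdentDistrib.cdfR_eq (h : IdentDistrib X Y μ μ) (x : ℝ) :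
    cdfR μ X x = cdfR μ Y x :=
  congrArg ENNReal.toReal (h.measure_mem_eq measurableSet_Iic)

end Tail

section Pigeonhole

variable {ι : Type*} [Fintype ι] [Nonempty ι]

lemma exists_div_lt_of_lt_sum_mul {b x : ι → ℝ} {B u : ℝ} (hu : 0 ≤ u) (hb : ∀ i, 0 < b i)
    (hbB : ∀ i, b i ≤ B) (h : u < ∑ i, b i * x i) :
    ∃ j, u / (Fintype.card ι * B) < x j := by
  have hN : (Fintype.card ι : ℝ) ≠ 0 := Nat.cast_ne_zero.2 Fintype.card_ne_zero
  have hconst : ∑ _i : ι, u / Fintype.card ι = u := by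
    rw [Finset.sum_const, Finset.card_univ, nsmul_eq_mul, mul_div_cancel₀ _ hN]
  obtain ⟨j, -, hj⟩ := Finset.exists_lt_of_sum_lt (hconst.trans_lt h)
  refine ⟨j, lt_of_le_of_lt ?_ ((div_lt_iff₀' (hb j)).2 hj)⟩
  rw [← div_div]
  exact div_le_div_of_nonneg_left (by positivity) (hb j) (hbB j)

lemma exists_ne_le_div_of_sum_mul_lt [DecidableEq ι] {a x : ι → ℝ} {α A t l : ℝ} {j : ι}
    (ha : ∀ i, 0 < a i) (hα : ∀ i, α ≤ a i) (hA : ∀ i, a i ≤ A) (ht : 0 ≤ t) (hl : l ≤ α * t)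
    (hax : ∑ i, a i * x i < l) (hj : t < x j) :
    ∃ i ≠ j, x i ≤ (l - α * t) / (Fintype.card ι * A) := by
  set N : ℝ := (Fintype.card ι : ℝ)
  set K := l - α * t
  have hN : 0 < N := Nat.cast_pos.2 Fintype.card_pos
  have hKN : K / N ≤ 0 := div_nonpos_of_nonpos_of_nonneg (by linarith) hN.le
  have hajxj : α * t ≤ a j * x j :=
    (mul_le_mul_of_nonneg_right (hα j) ht).trans (mul_le_mul_of_nonneg_left hj.le (ha j).le)
  have hsplit := Finset.add_sum_erase Finset.univ (fun i => a i * x i) (Finset.mem_univ j)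
  -- `K ≤ 0`, so `(N - 1) • (K / N) ≥ K`
  have hsum : ∑ i ∈ Finset.univ.erase j, a i * x i < ∑ _i ∈ Finset.univ.erase j, K / N := by
    rw [Finset.sum_const, Finset.card_erase_of_mem (Finset.mem_univ j), Finset.card_univ,
      nsmul_eq_mul, Nat.cast_pred Fintype.card_pos, sub_mul, one_mul, mul_div_cancel₀ _ hN.ne']
    linarith
  obtain ⟨i, hi, hlt⟩ := Finset.exists_lt_of_sum_lt hsum
  refine ⟨i, Finset.ne_of_mem_erase hi, ?_⟩
  calc x i ≤ K / N / a i := ((lt_div_iff₀' (ha i)).2 hlt).le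
    _ ≤ K / N / A := by
      simpa only [div_eq_mul_inv] using mul_le_mul_of_nonpos_left (inv_anti₀ (ha i) (hA i)) hKN
    _ = K / (N * A) := div_div _ _ _

end Pigeonhole

section Independent

variable {Ω ι : Type*} [MeasurableSpace Ω] {μ : Measure Ω} {ε : ι → Ω → ℝ}

lemma measureReal_lt_inter_le_le_tailP_mul_cdfR {X : Ω → ℝ} (hindep : iIndepFun ε μ)
    (hid : ∀ i, IdentDistrib (ε i) X μ μ) {d t : ℝ} (hdt : d ≤ t) (i j : ι) :
    μ.real ({ω | t < ε j ω} ∩ {ω | ε i ω ≤ d}) ≤ tailP μ X t * cdfR μ X d := by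
  by_cases hij : i = j
  · subst hij
    have hempty : {ω | t < ε i ω} ∩ {ω | ε i ω ≤ d} = ∅ :=
      eq_empty_iff_forall_notMem.2 fun ω ⟨h₁, h₂⟩ => (lt_of_le_of_lt hdt h₁).not_ge h₂
    rw [hempty, measureReal_empty]
    exact mul_nonneg ENNReal.toReal_nonneg ENNReal.toReal_nonneg
  · rw [← (hid j).tailP_eq, ← (hid i).cdfR_eq, tailP, cdfR, ← ENNReal.toReal_mul]
    exact (congrArg ENNReal.toReal ((hindep.indepFun (Ne.symm hij)).measure_inter_preimage_eq_mul
      (Ioi t) (Iic d) measurableSet_Ioi measurableSet_Iic)).le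

lemma measureReal_sum_lt_inter_lt_sum_le [IsFiniteMeasure μ] [Fintype ι] [Nonempty ι] {X : Ω → ℝ}
    (hindep : iIndepFun ε μ) (hid : ∀ i, IdentDistrib (ε i) X μ μ) {a b : ι → ℝ} {α A B l u : ℝ}
    (ha : ∀ i, 0 < a i) (hα : ∀ i, α ≤ a i) (hA : ∀ i, a i ≤ A) (hb : ∀ i, 0 < b i)
    (hB : ∀ i, b i ≤ B) (hu : 0 ≤ u) (hl : l ≤ α * (u / (Fintype.card ι * B))) :
    μ.real ({ω | ∑ i, a i * ε i ω < l} ∩ {ω | u < ∑ i, b i * ε i ω}) ≤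
      Fintype.card ι ^ 2 * (tailP μ X (u / (Fintype.card ι * B)) *
        cdfR μ X ((l - α * (u / (Fintype.card ι * B))) / (Fintype.card ι * A))) := by
  classical
  set t := u / (Fintype.card ι * B)
  set d := (l - α * t) / (Fintype.card ι * A)
  obtain ⟨i₀⟩ := ‹Nonempty ι›
  have ht : 0 ≤ t := div_nonneg hu (mul_nonneg (Nat.cast_nonneg _) ((hb i₀).le.trans (hB i₀)))
  have hdt : d ≤ t := (div_nonpos_of_nonpos_of_nonneg (sub_nonpos.2 hl)
    (mul_nonneg (Nat.cast_nonneg _) ((ha i₀).le.trans (hA i₀)))).trans ht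
  have hsub : {ω | ∑ i, a i * ε i ω < l} ∩ {ω | u < ∑ i, b i * ε i ω} ⊆
      ⋃ j, ⋃ i, {ω | t < ε j ω} ∩ {ω | ε i ω ≤ d} := by
    rintro ω ⟨hax, hbx⟩
    obtain ⟨j, hj⟩ := exists_div_lt_of_lt_sum_mul hu hb hB hbx
    obtain ⟨i, -, hi⟩ := exists_ne_le_div_of_sum_mul_lt ha hα hA ht hl hax hj
    exact mem_iUnion₂.2 ⟨j, i, hj, hi⟩
  calc _ ≤ ∑ j, ∑ i, μ.real ({ω | t < ε j ω} ∩ {ω | ε i ω ≤ d}) :=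
        (measureReal_mono hsub).trans <| (measureReal_iUnion_fintype_le _).trans <|
          Finset.sum_le_sum fun j _ => measureReal_iUnion_fintype_le _
    _ ≤ ∑ _j : ι, ∑ _i : ι, tailP μ X t * cdfR μ X d := by
        gcongr with j _ i _
        exact measureReal_lt_inter_le_le_tailP_mul_cdfR hindep hid hdt i j
    _ = _ := by simp only [Finset.sum_const, Finset.card_univ, nsmul_eq_mul]; ring

lemma tailP_mul_prod_le_measureReal_lt_sum [IsFiniteMeasure μ] [Fintype ι] [DecidableEq ι]
    (hindep : iIndepFun ε μ) {b : ι → ℝ} (hb : ∀ i, 0 ≤ b i) {j : ι} (hbj : 0 < b j) (u : ℝ) :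
    tailP μ (ε j) (u / b j) * ∏ i ∈ Finset.univ.erase j, tailP μ (ε i) 0 ≤
      μ.real {ω | u < ∑ i, b i * ε i ω} := by
  set s : ι → ℝ := Function.update 0 j (u / b j)
  have hsub : ⋂ i, ε i ⁻¹' Ioi (s i) ⊆ {ω | u < ∑ i, b i * ε i ω} := by
    intro ω hω
    simp only [mem_iInter, mem_preimage, mem_Ioi] at hω
    have hj : u < b j * ε j ω := (div_lt_iff₀' hbj).1 (by simpa [s] using hω j)
    have hrest : 0 ≤ ∑ i ∈ Finset.univ.erase j, b i * ε i ω :=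
      Finset.sum_nonneg fun i hi => mul_nonneg (hb i)
        (by simpa [s, Finset.ne_of_mem_erase hi] using (hω i).le)
    show u < ∑ i, b i * ε i ω
    rw [← Finset.add_sum_erase _ _ (Finset.mem_univ j)]
    linarith
  have hinter := hindep.measure_inter_preimage_eq_mul Finset.univ (sets := fun i => Ioi (s i))
    fun i _ => measurableSet_Ioi
  simp only [Finset.mem_univ, iInter_true] at hinter
  refine le_of_eq_of_le ?_ (measureReal_mono hsub)
  rw [measureReal_def, hinter, ENNReal.toReal_prod, ← Finset.mul_prod_erase _ _ (Finset.mem_univ j)]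
  congr 1
  · simp only [s, Function.update_self]
    rfl
  · refine Finset.prod_congr rfl fun i hi => ?_
    simp only [s, Function.update_of_ne (Finset.ne_of_mem_erase hi), Pi.zero_apply]
    rfl

lemma condP_sum_lt_lt_sum_le [IsFiniteMeasure μ] [Fintype ι] [DecidableEq ι] {X : Ω → ℝ}
    (hindep : iIndepFun ε μ) (hid : ∀ i, IdentDistrib (ε i) X μ μ) (htail : ∀ x, 0 < tailP μ X x)
    {a b : ι → ℝ} {α A B l u : ℝ} (ha : ∀ i, 0 < a i) (hα : ∀ i, α ≤ a i) (hA : ∀ i, a i ≤ A)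
    (hb : ∀ i, 0 < b i) (hB : ∀ i, b i ≤ B) (hu : 0 ≤ u) (hl : l ≤ α * (u / (Fintype.card ι * B)))
    (j : ι) :
    condP μ {ω | ∑ i, a i * ε i ω < l} {ω | u < ∑ i, b i * ε i ω} ≤
      Fintype.card ι ^ 2 / tailP μ X 0 ^ (Fintype.card ι - 1) *
        (tailP μ X (u / (Fintype.card ι * B)) / tailP μ X (u / b j)) *
          cdfR μ X ((l - α * (u / (Fintype.card ι * B))) / (Fintype.card ι * A)) := by
  have : Nonempty ι := ⟨j⟩
  have hden := tailP_mul_prod_le_measureReal_lt_sum hindep (fun i => (hb i).le) (hb j) u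
  rw [(hid j).tailP_eq, Finset.prod_congr rfl fun i _ => (hid i).tailP_eq 0, Finset.prod_const,
    Finset.card_erase_of_mem (Finset.mem_univ j), Finset.card_univ] at hden
  set N : ℝ := (Fintype.card ι : ℝ)
  calc _ ≤ N ^ 2 * (tailP μ X (u / (N * B)) * cdfR μ X ((l - α * (u / (N * B))) / (N * A))) /
        (tailP μ X (u / b j) * tailP μ X 0 ^ (Fintype.card ι - 1)) :=
        div_le_div₀ (mul_nonneg (sq_nonneg _) (mul_nonneg (htail _).le ENNReal.toReal_nonneg))
          (measureReal_sum_lt_inter_lt_sum_le hindep hid ha hα hA hb hB hu hl)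
          (mul_pos (htail _) (pow_pos (htail 0) _)) hden
    _ = _ := by ring

end Independent

theorem stmt_4_general {Ω : Type*} [MeasurableSpace Ω] (μ : Measure Ω) [IsProbabilityMeasure μ]
    (n : ℕ) (ε : Fin (n + 1) → Ω → ℝ) (hmeas : ∀ i, Measurable (ε i))
    (hindep : iIndepFun ε μ)
    (hident : ∀ i, Measure.map (ε i) μ = Measure.map (ε 0) μ)
    (θ : ℝ) (hrv : RegVarying μ (ε 0) θ)
    (a b : Fin (n + 1) → ℝ) (ha : ∀ i, 0 < a i) (hb : ∀ i, 0 < b i)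
    (l : ℝ) :
    Tendsto (fun u => condP μ {ω | ∑ i, a i * ε i ω < l} {ω | u < ∑ i, b i * ε i ω})
      atTop (nhds 0) := by
  have hid i : IdentDistrib (ε i) (ε 0) μ μ :=
    ⟨(hmeas i).aemeasurable, (hmeas 0).aemeasurable, hident i⟩
  obtain ⟨i₀, -, hα⟩ := Finset.univ.exists_min_image a Finset.univ_nonempty
  set N : ℝ := (Fintype.card (Fin (n + 1)) : ℝ)
  have hA i : a i ≤ ∑ i, a i := Finset.single_le_sum (fun i _ => (ha i).le) (Finset.mem_univ i)
  have hB i : b i ≤ ∑ i, b i := Finset.single_le_sum (fun i _ => (hb i).le) (Finset.mem_univ i)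
  have hN : 0 < N := Nat.cast_pos.2 Fintype.card_pos
  have hNA : 0 < N * ∑ i, a i := mul_pos hN ((ha 0).trans_le (hA 0))
  have hNB : 0 < N * ∑ i, b i := mul_pos hN ((hb 0).trans_le (hB 0))
  have hd : Tendsto (fun u => (l - a i₀ * (u / (N * ∑ i, b i))) / (N * ∑ i, a i)) atTop atBot := by
    refine Tendsto.atBot_div_const hNA ?_
    simpa only [sub_eq_add_neg, Function.comp_apply, id] using tendsto_atBot_add_const_left _ l
      (tendsto_neg_atTop_atBot.comp ((tendsto_id.atTop_div_const hNB).const_mul_atTop (ha i₀)))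
  have hlim := ((hrv.tendsto_tailP_div_div hNB (hb 0)).const_mul
    (N ^ 2 / tailP μ (ε 0) 0 ^ (Fintype.card (Fin (n + 1)) - 1))).mul
      ((tendsto_cdfR_atBot (μ := μ) (hmeas 0).aemeasurable).comp hd)
  rw [mul_zero] at hlim
  refine squeeze_zero' (Eventually.of_forall fun u =>
    div_nonneg ENNReal.toReal_nonneg ENNReal.toReal_nonneg) ?_ hlim
  filter_upwards [eventually_ge_atTop 0, eventually_ge_atTop (l / a i₀ * (N * ∑ i, b i))]
    with u hu hul
  exact condP_sum_lt_lt_sum_le hindep hid hrv.tailP_pos ha (fun i => hα i (Finset.mem_univ i)) hA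
    hb hB hu ((div_le_iff₀' (ha i₀)).1 ((le_div_iff₀ hNB).2 hul)) 0

/-- for iid continuous regularly varying ε₀,…,εₙ and strictly positive weights,
P(∑ aᵢεᵢ < λ | ∑ bᵢεᵢ > u) → 0 as u → ∞. -/
theorem stmt_4 {Ω : Type*} [MeasurableSpace Ω] (μ : Measure Ω) [IsProbabilityMeasure μ]
    (n : ℕ) (ε : Fin (n + 1) → Ω → ℝ) (hmeas : ∀ i, Measurable (ε i))
    (hindep : iIndepFun ε μ)
    (hident : ∀ i, Measure.map (ε i) μ = Measure.map (ε 0) μ)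
    (hcont : ∀ i, ∀ c : ℝ, μ {ω | ε i ω = c} = 0)
    (θ : ℝ) (hθ : 0 < θ) (hrv : RegVarying μ (ε 0) θ)
    (a b : Fin (n + 1) → ℝ) (ha : ∀ i, 0 < a i) (hb : ∀ i, 0 < b i)
    (l : ℝ) :
    Tendsto (fun u => condP μ {ω | ∑ i, a i * ε i ω < l} {ω | u < ∑ i, b i * ε i ω})
      atTop (nhds 0) :=
  stmt_4_general μ n ε hmeas hindep hident θ hrv a b ha hb l
end

section
/- Let (εₖ)_{k≥0} be iid non-negative regularly varying random variables with tail index θ > 0, and let (aₖ)_{k≥0} be constants with 0 ≤ aₖ ≤ γ cᵏ for some γ > 0 and 0 < c < 1. Then the series S = ∑_{k=0}^∞ aₖεₖ converges almost surely, and lim sup_{u→∞} P(S > u)/P(ε₀ > u) < ∞. -/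
open MeasureTheory ProbabilityTheory Filter Set

open Topology

lemma le_pow_mul_of_forall_le_mul {g : ℝ → ℝ} {t q x₀ : ℝ} (ht : 1 ≤ t) (hx₀ : 0 ≤ x₀)
    (hq : 0 ≤ q) (h : ∀ x, x₀ ≤ x → g (t * x) ≤ q * g x) {x : ℝ} (hx : x₀ ≤ x) (k : ℕ) :
    g (t ^ k * x) ≤ q ^ k * g x := by
  induction k with
  | zero => simp
  | succ k ih =>
    have hxk : x₀ ≤ t ^ k * x :=
      hx.trans (le_mul_of_one_le_left (hx₀.trans hx) (one_le_pow₀ ht))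
    calc g (t ^ (k + 1) * x) = g (t * (t ^ k * x)) := by rw [pow_succ', mul_assoc]
      _ ≤ q * g (t ^ k * x) := h _ hxk
      _ ≤ q * (q ^ k * g x) := mul_le_mul_of_nonneg_left ih hq
      _ = q ^ (k + 1) * g x := by ring

namespace RegVarying

variable {Ω : Type*} [MeasurableSpace Ω] {μ : Measure Ω} {X : Ω → ℝ} {θ : ℝ}

lemma eventually_tailP_pos (h : RegVarying μ X θ) : ∀ᶠ x in atTop, 0 < tailP μ X x := by
  obtain ⟨L, hL, hrep⟩ := h
  filter_upwards [hL.eventually_ne_zero, eventually_gt_atTop 0] with x hLx hx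
  refine ENNReal.toReal_nonneg.lt_of_ne (Ne.symm ?_)
  rw [← tailP, hrep x hx]
  exact mul_ne_zero (Real.rpow_pos_of_pos hx _).ne' hLx

lemma tendsto_tailP_mul_div_s7 (h : RegVarying μ X θ) {α : ℝ} (hα : 0 < α) :
    Tendsto (fun x => tailP μ X (α * x) / tailP μ X x) atTop (𝓝 (α ^ (-θ))) := by
  obtain ⟨L, hL, hrep⟩ := h
  have hlim := (hL α hα).const_mul (α ^ (-θ))
  rw [mul_one] at hlim
  refine hlim.congr' ?_
  filter_upwards [hL.eventually_ne_zero, eventually_gt_atTop 0] with x hLx hx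
  have hxθ := (Real.rpow_pos_of_pos hx (-θ)).ne'
  rw [hrep _ (mul_pos hα hx), hrep x hx, Real.mul_rpow hα.le hx.le]
  field_simp

lemma eventually_tailP_mul_le (h : RegVarying μ X θ) {α C : ℝ} (hα : 0 < α)
    (hC : α ^ (-θ) < C) : ∀ᶠ x in atTop, tailP μ X (α * x) ≤ C * tailP μ X x := by
  filter_upwards [(h.tendsto_tailP_mul_div_s7 hα).eventually (gt_mem_nhds hC),
    h.eventually_tailP_pos] with x hx hpos
  exact ((div_lt_iff₀ hpos).1 hx).le

/-- A discrete Potter bound. -/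
lemma exists_tailP_pow_mul_le (h : RegVarying μ X θ) (hθ : 0 < θ) {β t : ℝ} (hβ : 0 < β)
    (ht : 1 < t) : ∃ q D : ℝ, 0 ≤ q ∧ q < 1 ∧ 0 ≤ D ∧
      ∀ᶠ u in atTop, ∀ k : ℕ, tailP μ X (t ^ k * (β * u)) ≤ D * q ^ k * tailP μ X u := by
  obtain ⟨q, htq, hq1⟩ :=
    exists_between (Real.rpow_lt_one_of_one_lt_of_neg ht (neg_lt_zero.2 hθ))
  have hq0 : 0 ≤ q := (Real.rpow_pos_of_pos (zero_lt_one.trans ht) _).le.trans htq.le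
  obtain ⟨x₀, hx₀⟩ := eventually_atTop.1 (h.eventually_tailP_mul_le (zero_lt_one.trans ht) htq)
  refine ⟨q, β ^ (-θ) + 1, hq0, hq1, by positivity, ?_⟩
  filter_upwards [h.eventually_tailP_mul_le hβ (lt_add_one _),
    eventually_ge_atTop (max x₀ 0 / β)] with u hu hxu k
  have hβu : max x₀ 0 ≤ β * u := (div_le_iff₀' hβ).1 hxu
  calc tailP μ X (t ^ k * (β * u)) ≤ q ^ k * tailP μ X (β * u) :=
        le_pow_mul_of_forall_le_mul ht.le (le_max_right _ _) hq0
          (fun x hx => hx₀ x (le_of_max_le_left hx)) hβu k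
    _ ≤ q ^ k * ((β ^ (-θ) + 1) * tailP μ X u) := mul_le_mul_of_nonneg_left hu (by positivity)
    _ = (β ^ (-θ) + 1) * q ^ k * tailP μ X u := by ring

end RegVarying

section UnionBound

variable {Ω : Type*} [MeasurableSpace Ω] {μ : Measure Ω}

lemma measure_lt_mul_le_measure_div_lt {Y : Ω → ℝ} (hY : ∀ᵐ ω ∂μ, 0 ≤ Y ω) {a A x : ℝ}
    (hA : 0 < A) (ha : a ≤ A) : μ {ω | x < a * Y ω} ≤ μ {ω | x / A < Y ω} := by
  refine measure_mono_ae ?_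
  filter_upwards [hY] with ω hω hx
  exact (div_lt_iff₀' hA).2 (hx.trans_le (mul_le_mul_of_nonneg_right ha hω))

/-- If `∑ bₖ = s` and `∑ Xₖ > s`, some `Xₖ` exceeds its share `bₖ`. -/
lemma measure_lt_tsum_le_tsum {X : ℕ → Ω → ℝ} (hX : ∀ᵐ ω ∂μ, ∀ k, 0 ≤ X k ω) {b : ℕ → ℝ}
    {s : ℝ} (hb : HasSum b s) :
    μ {ω | s < ∑' k, X k ω} ≤ ∑' k, μ {ω | b k < X k ω} := by
  refine (measure_mono_ae ?_).trans (measure_iUnion_le _)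
  filter_upwards [hX] with ω hω (hs : s < ∑' k, X k ω)
  refine mem_iUnion.2 ?_
  by_contra! hle
  simp only [mem_ofPred_eq, not_lt] at hle
  exact (hasSum_le hle (Summable.of_nonneg_of_le hω hle hb.summable).hasSum hb).not_gt hs

lemma ae_summable_of_tsum_measure_lt_ne_top {X : ℕ → Ω → ℝ} (hX : ∀ᵐ ω ∂μ, ∀ k, 0 ≤ X k ω)
    {b : ℕ → ℝ} (hb : Summable b) (h : ∑' k, μ {ω | b k < X k ω} ≠ ⊤) :
    ∀ᵐ ω ∂μ, Summable fun k => X k ω := by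
  filter_upwards [ae_eventually_notMem h, hX] with ω hω hωX
  refine Summable.of_norm_bounded_eventually_nat hb ?_
  filter_upwards [hω] with k hk
  rw [Real.norm_of_nonneg (hωX k)]
  exact not_lt.1 hk

end UnionBound

lemma ENNReal.tsum_ofReal_mul_geometric {C q : ℝ} (hC : 0 ≤ C) (hq0 : 0 ≤ q) (hq1 : q < 1) :
    ∑' k : ℕ, ENNReal.ofReal (C * q ^ k) = ENNReal.ofReal (C * (1 - q)⁻¹) := by
  rw [← ENNReal.ofReal_tsum_of_nonneg (fun k => by positivity)
    ((summable_geometric_of_lt_one hq0 hq1).mul_left C), tsum_mul_left,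
    tsum_geometric_of_lt_one hq0 hq1]

lemma hasSum_one_sub_mul_pow_mul {r : ℝ} (hr0 : 0 ≤ r) (hr1 : r < 1) (u : ℝ) :
    HasSum (fun k => (1 - r) * r ^ k * u) u := by
  have h := ((hasSum_geometric_of_lt_one hr0 hr1).mul_left (1 - r)).mul_right u
  rwa [mul_inv_cancel₀ (sub_pos.2 hr1).ne', one_mul] at h

lemma exists_tsum_measure_lt_le_tailP {Ω : Type*} [MeasurableSpace Ω] {μ : Measure Ω}
    [IsFiniteMeasure μ] {ε : ℕ → Ω → ℝ} (hident : ∀ k, IdentDistrib (ε k) (ε 0) μ μ)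
    (hnonneg : ∀ k, ∀ᵐ ω ∂μ, 0 ≤ ε k ω) {θ : ℝ} (hθ : 0 < θ) (hrv : RegVarying μ (ε 0) θ)
    {a : ℕ → ℝ} {γ c r : ℝ} (hγ : 0 < γ) (hc0 : 0 < c) (hcr : c < r) (hr1 : r < 1)
    (ha : ∀ k, a k ≤ γ * c ^ k) : ∃ M : ℝ, 0 ≤ M ∧ ∀ᶠ u in atTop,
      ∑' k, μ {ω | (1 - r) * r ^ k * u < a k * ε k ω} ≤ ENNReal.ofReal (M * tailP μ (ε 0) u) := by
  obtain ⟨q, D, hq0, hq1, hD, hgeom⟩ := hrv.exists_tailP_pow_mul_le hθ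
    (div_pos (sub_pos.2 hr1) hγ) ((one_lt_div hc0).2 hcr)
  have hterm : ∀ᶠ u in atTop, ∀ k, μ {ω | (1 - r) * r ^ k * u < a k * ε k ω} ≤
      ENNReal.ofReal (D * tailP μ (ε 0) u * q ^ k) := by
    filter_upwards [hgeom] with u hu k
    have hscale : (1 - r) * r ^ k * u / (γ * c ^ k) = (r / c) ^ k * ((1 - r) / γ * u) := by
      rw [div_pow]
      field_simp
    calc _ ≤ _ := measure_lt_mul_le_measure_div_lt (hnonneg k) (by positivity) (ha k)
      _ = ENNReal.ofReal (tailP μ (ε 0) ((r / c) ^ k * ((1 - r) / γ * u))) := by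
        rw [hscale, tailP, ENNReal.ofReal_toReal (measure_ne_top _ _)]
        exact (hident k).measure_mem_eq measurableSet_Ioi
      _ ≤ _ := ENNReal.ofReal_le_ofReal ((hu k).trans_eq (by ring))
  refine ⟨D * (1 - q)⁻¹, mul_nonneg hD (inv_nonneg.2 (sub_nonneg.2 hq1.le)), ?_⟩
  filter_upwards [hterm, hrv.eventually_tailP_pos] with u hu hpos
  rw [mul_right_comm]
  exact (ENNReal.tsum_le_tsum hu).trans_eq
    (ENNReal.tsum_ofReal_mul_geometric (mul_nonneg hD hpos.le) hq0 hq1)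

theorem stmt_7_general {Ω : Type*} [MeasurableSpace Ω] (μ : Measure Ω) [IsProbabilityMeasure μ]
    (ε : ℕ → Ω → ℝ) (hmeas : ∀ k, Measurable (ε k))
    (hident : ∀ k, Measure.map (ε k) μ = Measure.map (ε 0) μ)
    (hnonneg : ∀ k, ∀ᵐ ω ∂μ, 0 ≤ ε k ω)
    (θ : ℝ) (hθ : 0 < θ) (hrv : RegVarying μ (ε 0) θ)
    (a : ℕ → ℝ) (γ c : ℝ) (hγ : 0 < γ) (hc0 : 0 < c) (hc1 : c < 1)
    (ha : ∀ k, 0 ≤ a k ∧ a k ≤ γ * c ^ k) :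
    (∀ᵐ ω ∂μ, Summable (fun k => a k * ε k ω)) ∧
    ∃ M : ℝ, ∀ᶠ u in atTop,
      tailP μ (fun ω => ∑' k, a k * ε k ω) u / tailP μ (ε 0) u ≤ M := by
  obtain ⟨r, hcr, hr1⟩ := exists_between hc1
  have hshare := hasSum_one_sub_mul_pow_mul (hc0.trans hcr).le hr1
  have hX : ∀ᵐ ω ∂μ, ∀ k, 0 ≤ a k * ε k ω := by
    filter_upwards [ae_all_iff.2 hnonneg] with ω hω k using mul_nonneg (ha k).1 (hω k)
  obtain ⟨M, hM, hsum⟩ := exists_tsum_measure_lt_le_tailP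
    (fun k => ⟨(hmeas k).aemeasurable, (hmeas 0).aemeasurable, hident k⟩) hnonneg hθ hrv
    hγ hc0 hcr hr1 (fun k => (ha k).2)
  obtain ⟨u₀, hu₀⟩ := hsum.exists
  refine ⟨ae_summable_of_tsum_measure_lt_ne_top hX (hshare u₀).summable
    (ne_top_of_le_ne_top ENNReal.ofReal_ne_top hu₀), M, ?_⟩
  filter_upwards [hsum, hrv.eventually_tailP_pos] with u hu hpos
  rw [div_le_iff₀ hpos]
  exact ENNReal.toReal_le_of_le_ofReal (mul_nonneg hM hpos.le)
    ((measure_lt_tsum_le_tsum hX (hshare u)).trans hu)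

/-- for iid non-negative regularly varying (εₖ) and geometrically decaying
non-negative coefficients aₖ ≤ γ cᵏ, the series S = ∑ aₖεₖ converges a.s. and
limsup_u P(S > u)/P(ε₀ > u) < ∞. -/
theorem stmt_7 {Ω : Type*} [MeasurableSpace Ω] (μ : Measure Ω) [IsProbabilityMeasure μ]
    (ε : ℕ → Ω → ℝ) (hmeas : ∀ k, Measurable (ε k))
    (hindep : iIndepFun ε μ)
    (hident : ∀ k, Measure.map (ε k) μ = Measure.map (ε 0) μ)
    (hnonneg : ∀ k, ∀ᵐ ω ∂μ, 0 ≤ ε k ω)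
    (θ : ℝ) (hθ : 0 < θ) (hrv : RegVarying μ (ε 0) θ)
    (a : ℕ → ℝ) (γ c : ℝ) (hγ : 0 < γ) (hc0 : 0 < c) (hc1 : c < 1)
    (ha : ∀ k, 0 ≤ a k ∧ a k ≤ γ * c ^ k) :
    (∀ᵐ ω ∂μ, Summable (fun k => a k * ε k ω)) ∧
    ∃ M : ℝ, ∀ᶠ u in atTop,
      tailP μ (fun ω => ∑' k, a k * ε k ω) u / tailP μ (ε 0) u ≤ M :=
  stmt_7_general μ ε hmeas hident hnonneg θ hθ hrv a γ c hγ hc0 hc1 ha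
end

section
/- Let X and Y be continuous real random variables (with distribution functions F_X, F_Y) whose supports contain a neighborhood of +∞. Then lim_{u→1⁻} E[F_Y(Y) ∣ F_X(X) > u] = 1 if and only if for every λ ∈ ℝ, lim_{v→∞} P(Y > λ ∣ X > v) = 1. -/
open MeasureTheory ProbabilityTheory Filter Set

open Topology

/-! Write `G` for the distribution function of `Y`. For every event `B` of positive mass and every
level `t`,
`G t * P(Y > t | B) ≤ E[G(Y) | B] ≤ G t + (1 - G t) * P(Y > t | B)`,
and `G t < 1` with `G t → 1` as `t → ∞`; so along any family of events, `E[G(Y) | B] → 1` iff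
`P(Y > t | B) → 1` for every `t`. It remains to pass from `u → 1⁻` to `v → ∞`: the continuous
distribution function `F` of `X` maps `atTop` onto `𝓝[<] 1` by the intermediate value theorem, and
the event `{F(X) > F(v)}` differs from `{X > v}` only by `{X ∈ (v, s]}` for the flat piece
`[v, s]` of `F`, which is null. -/

theorem Continuous.map_atTop_eq_nhdsLT {F : ℝ → ℝ} (hF : Continuous F) {a : ℝ}
    (hlt : ∀ x, F x < a) (hlim : Tendsto F atTop (𝓝 a)) : map F atTop = 𝓝[<] a := by
  refine le_antisymm (tendsto_nhdsWithin_iff.2 ⟨hlim, Eventually.of_forall hlt⟩) fun s hs => ?_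
  obtain ⟨N, hN⟩ := mem_atTop_sets.1 hs
  refine mem_of_superset (Ioo_mem_nhdsLT (hlt N)) fun y hy => ?_
  obtain ⟨b, hyb, hNb⟩ := ((hlim.eventually (lt_mem_nhds hy.2)).and (eventually_ge_atTop N)).exists
  obtain ⟨c, hc, rfl⟩ := intermediate_value_Icc hNb hF.continuousOn ⟨hy.1.le, hyb.le⟩
  exact hN c hc.1

namespace ProbabilityTheory

variable {ν : Measure ℝ} [IsProbabilityMeasure ν]

theorem continuous_cdf [NullSingletonClass ν] : Continuous (cdf ν) := by
  refine continuous_iff_continuousAt.2 fun a => ?_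
  rw [(monotone_cdf ν).continuousAt_iff_leftLim_eq_rightLim, (cdf ν).rightLim_eq]
  have h := (cdf ν).measure_singleton a
  rw [measure_cdf, measure_singleton, eq_comm, ENNReal.ofReal_eq_zero] at h
  linarith [(monotone_cdf ν).leftLim_le (le_refl a)]

theorem cdf_lt_one {x : ℝ} (hx : 0 < ν (Ioi x)) : cdf ν x < 1 := by
  have hpos : 0 < ν.real (Ioi x) := ENNReal.toReal_pos hx.ne' (measure_ne_top ν _)
  rw [cdf_eq_real, ← compl_Ioi, probReal_compl_eq_one_sub measurableSet_Ioi]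
  linarith

theorem measure_flat_cdf_eq_zero [NullSingletonClass ν] {v : ℝ} (hv : cdf ν v < 1) :
    ν {x | v < x ∧ cdf ν x ≤ cdf ν v} = 0 := by
  let T := {x | v ≤ x ∧ cdf ν x ≤ cdf ν v}
  obtain ⟨b, hb⟩ := ((tendsto_order.1 (tendsto_cdf_atTop ν)).1 _ hv).exists
  have hT_bdd : BddAbove T := ⟨b, fun x hx => le_of_not_gt fun hbx =>
    (hb.trans_le (monotone_cdf ν hbx.le)).not_ge hx.2⟩
  have hT_closed : IsClosed T := isClosed_Ici.inter (isClosed_le continuous_cdf continuous_const)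
  have hsup := hT_closed.csSup_mem ⟨v, le_rfl, le_rfl⟩ hT_bdd
  have hIoc := (cdf ν).measure_Ioc v (sSup T)
  rw [measure_cdf, ENNReal.ofReal_eq_zero.2 (sub_nonpos.2 hsup.2)] at hIoc
  refine measure_mono_null (fun x hx => ?_) hIoc
  exact ⟨hx.1, le_csSup hT_bdd ⟨hx.1.le, hx.2⟩⟩

end ProbabilityTheory

section

variable {Ω : Type*} [MeasurableSpace Ω] {μ : Measure Ω}

theorem cdfR_eq_cdf_map [IsProbabilityMeasure μ] {X : Ω → ℝ} (hX : Measurable X) :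
    cdfR μ X = cdf (μ.map X) := by
  have := Measure.isProbabilityMeasure_map (μ := μ) hX.aemeasurable
  ext t
  rw [cdf_eq_real, measureReal_def, Measure.map_apply hX measurableSet_Iic]
  rfl

theorem setOf_cdf_map_lt_ae_eq [IsProbabilityMeasure μ] {X : Ω → ℝ} (hX : AEMeasurable X μ)
    [NullSingletonClass (μ.map X)] {v : ℝ} (hv : cdf (μ.map X) v < 1) :
    {ω | cdf (μ.map X) v < cdf (μ.map X) (X ω)} =ᵐ[μ] {ω | v < X ω} := by
  have := Measure.isProbabilityMeasure_map hX
  have hsub : {ω | cdf (μ.map X) v < cdf (μ.map X) (X ω)} ⊆ {ω | v < X ω} := fun ω h =>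
    lt_of_not_ge fun hle => h.not_ge (monotone_cdf _ hle)
  refine (ae_eq_set.2 ⟨by rw [sdiff_eq_empty.2 hsub, measure_empty], ?_⟩)
  refine measure_mono_null (t := X ⁻¹' {x | v < x ∧ cdf (μ.map X) x ≤ cdf (μ.map X) v})
    (fun ω hω => ⟨hω.1, not_lt.1 hω.2⟩) ?_
  exact nonpos_iff_eq_zero.1 ((Measure.le_map_apply hX _).trans (measure_flat_cdf_eq_zero hv).le)

theorem condE_congr_set {s t : Set Ω} (h : s =ᵐ[μ] t) (g : Ω → ℝ) :
    condE μ s g = condE μ t g := by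
  rw [condE, condE, setIntegral_congr_set h, measure_congr h]

theorem condE_mono {f g : Ω → ℝ} (hf : Integrable f μ) (hg : Integrable g μ)
    (hfg : ∀ ω, f ω ≤ g ω) (B : Set Ω) : condE μ B f ≤ condE μ B g :=
  div_le_div_of_nonneg_right (setIntegral_mono hf.integrableOn hg.integrableOn hfg)
    ENNReal.toReal_nonneg

theorem condE_add {f g : Ω → ℝ} (hf : Integrable f μ) (hg : Integrable g μ) (B : Set Ω) :
    condE μ B (fun ω => f ω + g ω) = condE μ B f + condE μ B g := by
  rw [condE, condE, condE, integral_add hf.integrableOn hg.integrableOn, add_div]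

theorem condE_indicator_const {A : Set Ω} (hA : MeasurableSet A) (B : Set Ω) (b : ℝ) :
    condE μ B (A.indicator fun _ => b) = b * condP μ A B := by
  rw [condE, condP, setIntegral_indicator hA, setIntegral_const, smul_eq_mul, inter_comm,
    measureReal_def]
  ring

variable [IsFiniteMeasure μ]

theorem condP_le_one (A B : Set Ω) : condP μ A B ≤ 1 := by
  rcases eq_or_ne (μ B).toReal 0 with h | h
  · rw [condP, h, div_zero]
    exact zero_le_one
  · rw [condP, div_le_one (lt_of_le_of_ne ENNReal.toReal_nonneg h.symm)]
    exact ENNReal.toReal_mono (measure_ne_top μ _) (measure_mono inter_subset_right)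

theorem condE_const {B : Set Ω} (hB : μ B ≠ 0) (a : ℝ) : condE μ B (fun _ => a) = a := by
  have hB' : (μ B).toReal ≠ 0 := ENNReal.toReal_ne_zero.2 ⟨hB, measure_ne_top μ B⟩
  rw [condE, setIntegral_const, smul_eq_mul, measureReal_def, mul_div_cancel_left₀ a hB']

end

section

variable {Ω : Type*} [MeasurableSpace Ω] {μ : Measure Ω} [IsFiniteMeasure μ]
  (ν : Measure ℝ) {Y : Ω → ℝ}

theorem integrable_cdf_comp (hY : Measurable Y) : Integrable (fun ω => cdf ν (Y ω)) μ := by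
  refine .of_bound ((monotone_cdf ν).measurable.comp hY).aestronglyMeasurable 1
    (ae_of_all _ fun ω => ?_)
  rw [Real.norm_of_nonneg (cdf_nonneg ν _)]
  exact cdf_le_one ν _

theorem condE_cdf_comp_le_one (hY : Measurable Y) {B : Set Ω} (hB : μ B ≠ 0) :
    condE μ B (fun ω => cdf ν (Y ω)) ≤ 1 :=
  (condE_mono (integrable_cdf_comp ν hY) (integrable_const 1) (fun ω => cdf_le_one ν (Y ω))
    B).trans_eq (condE_const hB 1)

theorem cdf_mul_condP_le_condE (hY : Measurable Y) (B : Set Ω) (t : ℝ) :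
    cdf ν t * condP μ {ω | t < Y ω} B ≤ condE μ B (fun ω => cdf ν (Y ω)) := by
  have hA : MeasurableSet {ω | t < Y ω} := hY measurableSet_Ioi
  rw [← condE_indicator_const hA]
  refine condE_mono ((integrable_const _).indicator hA) (integrable_cdf_comp ν hY) (fun ω => ?_) B
  by_cases hω : t < Y ω
  · simpa [hω] using monotone_cdf ν hω.le
  · simpa [hω] using cdf_nonneg ν (Y ω)

theorem condE_le_cdf_add_mul_condP (hY : Measurable Y) {B : Set Ω} (hB : μ B ≠ 0) (t : ℝ) :
    condE μ B (fun ω => cdf ν (Y ω)) ≤ cdf ν t + (1 - cdf ν t) * condP μ {ω | t < Y ω} B := by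
  have hA : MeasurableSet {ω | t < Y ω} := hY measurableSet_Ioi
  have hind : Integrable ({ω | t < Y ω}.indicator fun _ => 1 - cdf ν t) μ :=
    (integrable_const _).indicator hA
  have hle (ω : Ω) :
      cdf ν (Y ω) ≤ cdf ν t + {ω | t < Y ω}.indicator (fun _ => 1 - cdf ν t) ω := by
    by_cases hω : t < Y ω
    · simpa [hω] using cdf_le_one ν (Y ω)
    · simpa [hω] using monotone_cdf ν (not_lt.1 hω)
  calc condE μ B (fun ω => cdf ν (Y ω))
      ≤ condE μ B (fun ω => cdf ν t + {ω | t < Y ω}.indicator (fun _ => 1 - cdf ν t) ω) :=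
        condE_mono (integrable_cdf_comp ν hY) ((integrable_const _).add hind) hle B
    _ = cdf ν t + (1 - cdf ν t) * condP μ {ω | t < Y ω} B := by
        rw [condE_add (integrable_const _) hind, condE_const hB, condE_indicator_const hA]

theorem tendsto_condE_cdf_comp_iff {ι : Type*} {l : Filter ι} {B : ι → Set Ω}
    (hY : Measurable Y) (hB : ∀ i, μ (B i) ≠ 0) (hν : ∀ t, cdf ν t < 1) :
    Tendsto (fun i => condE μ (B i) (fun ω => cdf ν (Y ω))) l (𝓝 1) ↔
      ∀ t, Tendsto (fun i => condP μ {ω | t < Y ω} (B i)) l (𝓝 1) := by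
  constructor
  · intro hE t
    have hc : 0 < 1 - cdf ν t := sub_pos.2 (hν t)
    have hlow : Tendsto (fun i => (condE μ (B i) (fun ω => cdf ν (Y ω)) - cdf ν t)
        / (1 - cdf ν t)) l (𝓝 1) := by
      simpa [div_self hc.ne'] using (hE.sub_const (cdf ν t)).div_const (1 - cdf ν t)
    refine tendsto_of_tendsto_of_tendsto_of_le_of_le hlow tendsto_const_nhds (fun i => ?_)
      (fun i => condP_le_one _ _)
    rw [div_le_iff₀ hc]
    linarith [condE_le_cdf_add_mul_condP ν hY (hB i) t]
  · intro hP
    refine tendsto_order.2 ⟨fun a ha => ?_, fun a ha =>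
      Eventually.of_forall fun i => (condE_cdf_comp_le_one ν hY (hB i)).trans_lt ha⟩
    obtain ⟨t, ht⟩ := ((tendsto_order.1 (tendsto_cdf_atTop ν)).1 a ha).exists
    have hlim := (hP t).const_mul (cdf ν t)
    rw [mul_one] at hlim
    filter_upwards [(tendsto_order.1 hlim).1 a ht] with i hi
    exact hi.trans_le (cdf_mul_condP_le_condE ν hY (B i) t)

end

theorem stmt_9_general {Ω : Type*} [MeasurableSpace Ω] (μ : Measure Ω) [IsProbabilityMeasure μ]
    (X Y : Ω → ℝ) (hX : Measurable X) (hY : Measurable Y)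
    (hXcont : ∀ c : ℝ, μ {ω | X ω = c} = 0)
    (hXsupp : ∀ v : ℝ, 0 < μ {ω | v < X ω})
    (hYsupp : ∀ v : ℝ, 0 < μ {ω | v < Y ω}) :
    Tendsto (fun u => condE μ {ω | u < cdfR μ X (X ω)} (fun ω => cdfR μ Y (Y ω)))
        (nhdsWithin 1 (Set.Iio 1)) (nhds 1)
      ↔ ∀ l : ℝ, Tendsto (fun v => condP μ {ω | l < Y ω} {ω | v < X ω}) atTop (nhds 1) := by
  have := Measure.isProbabilityMeasure_map (μ := μ) hX.aemeasurable
  have := Measure.isProbabilityMeasure_map (μ := μ) hY.aemeasurable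
  have : NullSingletonClass (μ.map X) :=
    ⟨fun c => by rw [Measure.map_apply hX (measurableSet_singleton c)]; exact hXcont c⟩
  have hFX (v : ℝ) : cdf (μ.map X) v < 1 :=
    cdf_lt_one (by rw [Measure.map_apply hX measurableSet_Ioi]; exact hXsupp v)
  have hFY (v : ℝ) : cdf (μ.map Y) v < 1 :=
    cdf_lt_one (by rw [Measure.map_apply hY measurableSet_Ioi]; exact hYsupp v)
  rw [cdfR_eq_cdf_map hX, cdfR_eq_cdf_map hY,
    ← continuous_cdf.map_atTop_eq_nhdsLT hFX (tendsto_cdf_atTop _), tendsto_map'_iff]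
  have hreparam : (fun u => condE μ {ω | u < cdf (μ.map X) (X ω)} (fun ω => cdf (μ.map Y) (Y ω)))
      ∘ cdf (μ.map X) = fun v => condE μ {ω | v < X ω} (fun ω => cdf (μ.map Y) (Y ω)) :=
    funext fun v => condE_congr_set (setOf_cdf_map_lt_ae_eq hX.aemeasurable (hFX v)) _
  rw [hreparam]
  exact tendsto_condE_cdf_comp_iff _ hY (fun v => (hXsupp v).ne') hFY

/-- for continuous X, Y with supports containing a neighborhood of +∞,
lim_{u→1⁻} E[F_Y(Y) | F_X(X) > u] = 1 iff for every λ,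
lim_{v→∞} P(Y > λ | X > v) = 1. -/
theorem stmt_9 {Ω : Type*} [MeasurableSpace Ω] (μ : Measure Ω) [IsProbabilityMeasure μ]
    (X Y : Ω → ℝ) (hX : Measurable X) (hY : Measurable Y)
    (hXcont : ∀ c : ℝ, μ {ω | X ω = c} = 0)
    (hYcont : ∀ c : ℝ, μ {ω | Y ω = c} = 0)
    (hXsupp : ∀ v : ℝ, 0 < μ {ω | v < X ω})
    (hYsupp : ∀ v : ℝ, 0 < μ {ω | v < Y ω}) :
    Tendsto (fun u => condE μ {ω | u < cdfR μ X (X ω)} (fun ω => cdfR μ Y (Y ω)))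
        (nhdsWithin 1 (Set.Iio 1)) (nhds 1)
      ↔ ∀ l : ℝ, Tendsto (fun v => condP μ {ω | l < Y ω} {ω | v < X ω}) atTop (nhds 1) :=
  stmt_9_general μ X Y hX hY hXcont hXsupp hYsupp
end

section
/- Let (X_t, Y_t) follow a stable VAR(q) model with non-negative coefficients and causal representation X_t = ∑ aᵢε^X_{t−i} + ∑ cᵢε^Y_{t−i}, Y_t = ∑ bᵢε^Y_{t−i} + ∑ dᵢε^X_{t−i}. If X causes Y in the sense that the structural coefficient δ_r > 0 for some r ≤ q (so that Y_r = δ_r X_0 + (other non-negative terms)), then the extremal causal condition holds: there exists r ≤ q such that for every i ≥ 0, aᵢ > 0 implies d_{i+r} > 0. -/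
open MeasureTheory ProbabilityTheory Filter Set

/-
A linear relation `c₁ Z + U = c₂ Z + V`, with `Z` one innovation and `U`, `V` functions of the
other innovations only, forces `c₁ = c₂`: otherwise `Z` would be a function of innovations
independent of it, hence independent of itself, hence a.s. constant, which an atomless
innovation is not. Expanding `Y_r = δ_r X_0 + …` in the innovations and comparing the
coefficients of `εX (-i)` gives `d (i + r) = δ_r a i + p (i + r) ≥ δ_r a i`.
-/

lemma measurable_tsum_of_summable {Ω : Type*} {M : MeasurableSpace Ω} {g : ℕ → Ω → ℝ}
    (hg : ∀ j, Measurable[M] (g j)) (hsum : ∀ ω, Summable fun j => g j ω) :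
    Measurable[M] fun ω => ∑' j, g j ω :=
  measurable_of_tendsto_metrizable
    (fun n => Finset.measurable_sum (Finset.range n) fun j _ => hg j)
    (tendsto_pi_nhds.2 fun ω => (hsum ω).hasSum.tendsto_sum_nat)

lemma exists_measurable_tsum_eq_add {Ω : Type*} {M : MeasurableSpace Ω} {g : ℕ → Ω → ℝ}
    (hsum : ∀ ω, Summable fun j => g j ω) (j₀ : ℕ) (hg : ∀ j ≠ j₀, Measurable[M] (g j)) :
    ∃ R : Ω → ℝ, Measurable[M] R ∧ ∀ ω, ∑' j, g j ω = g j₀ ω + R ω := by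
  classical
  refine ⟨fun ω => ∑' j, if j = j₀ then 0 else g j ω, ?_,
    fun ω => (hsum ω).tsum_eq_add_tsum_ite j₀⟩
  refine measurable_tsum_of_summable (fun j => ?_) (fun ω => ?_)
  · by_cases h : j = j₀
    · simp [h]
    · simpa [h] using hg j h
  · exact (hsum ω).sub ((hasSum_ite_eq j₀ (g j₀ ω)).summable) |>.congr fun j => by
      by_cases h : j = j₀ <;> simp [h]

lemma exists_ae_eq_const_of_indepFun_self {Ω β : Type*} [MeasurableSpace Ω] {μ : Measure Ω}
    [IsProbabilityMeasure μ] [MeasurableSpace β] [MeasurableSpace.CountablySeparated β]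
    [Nonempty β] {f : Ω → β} (hf : Measurable f) (hindep : IndepFun f f μ) :
    ∃ c, f =ᵐ[μ] Function.const Ω c := by
  refine exists_eventuallyEq_const_of_forall_separating MeasurableSet fun U hU => ?_
  rcases measure_eq_zero_or_one_of_indep_self hindep ⟨U, hU, rfl⟩ with h | h
  · exact Or.inr (measure_eq_zero_iff_ae_notMem.1 h)
  · exact Or.inl (ae_iff.2 (by rw [← prob_compl_eq_zero_iff (hf hU)] at h; exact h))

abbrev comapOthers {ι Ω : Type*} (ε : ι → Ω → ℝ) (k₀ : ι) : MeasurableSpace Ω :=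
  ⨆ k ∈ ({k₀}ᶜ : Set ι), MeasurableSpace.comap (ε k) inferInstance

lemma measurable_comapOthers {ι Ω : Type*} {ε : ι → Ω → ℝ} {k₀ k : ι} (hk : k ≠ k₀) :
    Measurable[comapOthers ε k₀] (ε k) :=
  (comap_measurable (ε k)).mono (le_iSup₂ (f := fun k (_ : k ∈ ({k₀}ᶜ : Set ι)) =>
    MeasurableSpace.comap (ε k) inferInstance) k hk) le_rfl

lemma indep_comap_comapOthers {ι Ω : Type*} [MeasurableSpace Ω] {μ : Measure Ω}
    {ε : ι → Ω → ℝ} (hmeas : ∀ k, Measurable (ε k)) (hindep : iIndepFun ε μ) (k₀ : ι) :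
    Indep (MeasurableSpace.comap (ε k₀) inferInstance) (comapOthers ε k₀) μ := by
  simpa [comapOthers] using indep_iSup_of_disjoint (fun k => (hmeas k).comap_le)
    hindep.iIndep (disjoint_compl_right (a := ({k₀} : Set ι)))

lemma eq_of_mul_add_eq_mul_add {ι Ω : Type*} [MeasurableSpace Ω] {μ : Measure Ω}
    [IsProbabilityMeasure μ] {ε : ι → Ω → ℝ} (hmeas : ∀ k, Measurable (ε k))
    (hindep : iIndepFun ε μ) {k₀ : ι} (hcont : ∀ v : ℝ, μ {ω | ε k₀ ω = v} = 0)
    {c₁ c₂ : ℝ} {U V : Ω → ℝ} (hU : Measurable[comapOthers ε k₀] U)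
    (hV : Measurable[comapOthers ε k₀] V)
    (h : ∀ ω, c₁ * ε k₀ ω + U ω = c₂ * ε k₀ ω + V ω) : c₁ = c₂ := by
  by_contra hne
  have hsolve : ε k₀ = fun ω => (V ω - U ω) / (c₁ - c₂) := by
    funext ω
    rw [eq_div_iff (sub_ne_zero.2 hne)]
    linarith [h ω]
  have hself : IndepFun (ε k₀) (ε k₀) μ :=
    indep_of_indep_of_le_right (indep_comap_comapOthers hmeas hindep k₀)
      (by rw [hsolve]; exact ((hV.sub hU).div_const _).comap_le)
  obtain ⟨v, hv⟩ := exists_ae_eq_const_of_indepFun_self (hmeas k₀) hself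
  have hnot : ∀ᵐ ω ∂μ, ε k₀ ω ≠ v := measure_eq_zero_iff_ae_notMem.1 (hcont v)
  obtain ⟨ω, hω, hω'⟩ := (hv.and hnot).exists
  exact hω' hω

lemma exists_measurable_tsum_mul_eq_add {Ω : Type*} {M : MeasurableSpace Ω} {f : ℕ → ℝ}
    {e : ℤ → Ω → ℝ} {t t₀ : ℤ} (hsum : ∀ ω, Summable fun j : ℕ => f j * e (t - j) ω)
    (he : ∀ u ≠ t₀, Measurable[M] (e u)) (j₀ : ℕ) (hj₀ : t - j₀ = t₀) :
    ∃ R : Ω → ℝ, Measurable[M] R ∧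
      ∀ ω, ∑' j : ℕ, f j * e (t - j) ω = f j₀ * e t₀ ω + R ω := by
  subst hj₀
  exact exists_measurable_tsum_eq_add hsum j₀ fun j hj => (he _ (by omega)).const_mul (f j)

theorem stmt_16_general {Ω : Type*} [MeasurableSpace Ω] (μ : Measure Ω) [IsProbabilityMeasure μ]
    (εX εY : ℤ → Ω → ℝ)
    (hmeasX : ∀ t, Measurable (εX t)) (hmeasY : ∀ t, Measurable (εY t))
    (hindep : iIndepFun (Sum.elim εX εY) μ)
    (hcontX : ∀ t, ∀ v : ℝ, μ {ω | εX t ω = v} = 0)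
    (X Y : ℤ → Ω → ℝ)
    (a b c d p s : ℕ → ℝ)
    (hp : ∀ i, 0 ≤ p i)
    (q r : ℕ) (hrq : r ≤ q) (δr : ℝ) (hδr : 0 < δr)
    (hsummable : ∀ ω, ∀ t : ℤ,
      Summable (fun i : ℕ => a i * εX (t - (i : ℤ)) ω) ∧
      Summable (fun i : ℕ => c i * εY (t - (i : ℤ)) ω) ∧
      Summable (fun i : ℕ => b i * εY (t - (i : ℤ)) ω) ∧
      Summable (fun i : ℕ => d i * εX (t - (i : ℤ)) ω) ∧
      Summable (fun i : ℕ => p i * εX (t - (i : ℤ)) ω) ∧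
      Summable (fun i : ℕ => s i * εY (t - (i : ℤ)) ω))
    (hXrep : ∀ t ω, X t ω =
      (∑' i : ℕ, a i * εX (t - (i : ℤ)) ω) + ∑' i : ℕ, c i * εY (t - (i : ℤ)) ω)
    (hYrep : ∀ t ω, Y t ω =
      (∑' i : ℕ, b i * εY (t - (i : ℤ)) ω) + ∑' i : ℕ, d i * εX (t - (i : ℤ)) ω)
    (hstruct : ∀ ω, Y (r : ℤ) ω = δr * X 0 ω +
      ((∑' i : ℕ, p i * εX ((r : ℤ) - (i : ℤ)) ω) +
        ∑' i : ℕ, s i * εY ((r : ℤ) - (i : ℤ)) ω)) :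
    ∃ r' : ℕ, r' ≤ q ∧ ∀ i : ℕ, 0 < a i → 0 < d (i + r') := by
  have hmeasE : ∀ k, Measurable (Sum.elim εX εY k) := Sum.forall.2 ⟨hmeasX, hmeasY⟩
  refine ⟨r, hrq, fun i hai => ?_⟩
  have hXm (u : ℤ) (hu : u ≠ -i) :
      Measurable[comapOthers (Sum.elim εX εY) (Sum.inl (-i))] (εX u) :=
    measurable_comapOthers (k := Sum.inl u) (by simpa using hu)
  have hYseries (f : ℕ → ℝ) (t : ℤ) (hsum : ∀ ω, Summable fun j : ℕ => f j * εY (t - j) ω) :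
      Measurable[comapOthers (Sum.elim εX εY) (Sum.inl (-i))]
        fun ω => ∑' j : ℕ, f j * εY (t - j) ω :=
    measurable_tsum_of_summable
      (fun j => (measurable_comapOthers (k := Sum.inr _) (by simp)).const_mul (f j)) hsum
  have hlag : (r : ℤ) - (i + r : ℕ) = -i := by push_cast; ring
  obtain ⟨A, hAm, hA⟩ :=
    exists_measurable_tsum_mul_eq_add (fun ω => (hsummable ω 0).1) hXm i (zero_sub _)
  obtain ⟨D, hDm, hD⟩ :=
    exists_measurable_tsum_mul_eq_add (fun ω => (hsummable ω r).2.2.2.1) hXm (i + r) hlag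
  obtain ⟨P, hPm, hP⟩ :=
    exists_measurable_tsum_mul_eq_add (fun ω => (hsummable ω r).2.2.2.2.1) hXm (i + r) hlag
  have hcoef : d (i + r) = δr * a i + p (i + r) := by
    refine eq_of_mul_add_eq_mul_add (k₀ := Sum.inl (-(i : ℤ))) hmeasE hindep (hcontX _)
      (U := fun ω => (∑' j : ℕ, b j * εY (r - j) ω) + D ω)
      (V := fun ω => δr * (A ω + ∑' j : ℕ, c j * εY (0 - j) ω) + P ω +
        ∑' j : ℕ, s j * εY (r - j) ω)
      ((hYseries b r fun ω => (hsummable ω r).2.2.1).add hDm)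
      ((((hAm.add (hYseries c 0 fun ω => (hsummable ω 0).2.1)).const_mul δr).add hPm).add
        (hYseries s r fun ω => (hsummable ω r).2.2.2.2.2)) fun ω => ?_
    have h := hstruct ω
    rw [hYrep, hXrep, hA, hD, hP] at h
    rw [Sum.elim_inl]
    linarith
  exact hcoef ▸ add_pos_of_pos_of_nonneg (mul_pos hδr hai) (hp _)

/-- extremal causal condition in the hVAR model: if the causal (MA)
representation of (X, Y) has non-negative coefficients and Y_r = δ_r X_0 + (other
non-negative MA terms) with δ_r > 0 for some r ≤ q, then there is r' ≤ q such that
aᵢ > 0 implies d_{i+r'} > 0 for every i. -/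
theorem stmt_16 {Ω : Type*} [MeasurableSpace Ω] (μ : Measure Ω) [IsProbabilityMeasure μ]
    (εX εY : ℤ → Ω → ℝ)
    (hmeasX : ∀ t, Measurable (εX t)) (hmeasY : ∀ t, Measurable (εY t))
    (hindep : iIndepFun (Sum.elim εX εY) μ)
    (hcontX : ∀ t, ∀ v : ℝ, μ {ω | εX t ω = v} = 0)
    (hcontY : ∀ t, ∀ v : ℝ, μ {ω | εY t ω = v} = 0)
    (X Y : ℤ → Ω → ℝ)
    (a b c d p s : ℕ → ℝ)
    (ha : ∀ i, 0 ≤ a i) (hb : ∀ i, 0 ≤ b i) (hc : ∀ i, 0 ≤ c i) (hd : ∀ i, 0 ≤ d i)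
    (hp : ∀ i, 0 ≤ p i) (hs : ∀ i, 0 ≤ s i)
    (q r : ℕ) (hrq : r ≤ q) (δr : ℝ) (hδr : 0 < δr)
    (hsummable : ∀ ω, ∀ t : ℤ,
      Summable (fun i : ℕ => a i * εX (t - (i : ℤ)) ω) ∧
      Summable (fun i : ℕ => c i * εY (t - (i : ℤ)) ω) ∧
      Summable (fun i : ℕ => b i * εY (t - (i : ℤ)) ω) ∧
      Summable (fun i : ℕ => d i * εX (t - (i : ℤ)) ω) ∧
      Summable (fun i : ℕ => p i * εX (t - (i : ℤ)) ω) ∧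
      Summable (fun i : ℕ => s i * εY (t - (i : ℤ)) ω))
    (hXrep : ∀ t ω, X t ω =
      (∑' i : ℕ, a i * εX (t - (i : ℤ)) ω) + ∑' i : ℕ, c i * εY (t - (i : ℤ)) ω)
    (hYrep : ∀ t ω, Y t ω =
      (∑' i : ℕ, b i * εY (t - (i : ℤ)) ω) + ∑' i : ℕ, d i * εX (t - (i : ℤ)) ω)
    (hstruct : ∀ ω, Y (r : ℤ) ω = δr * X 0 ω +
      ((∑' i : ℕ, p i * εX ((r : ℤ) - (i : ℤ)) ω) +
        ∑' i : ℕ, s i * εY ((r : ℤ) - (i : ℤ)) ω)) :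
    ∃ r' : ℕ, r' ≤ q ∧ ∀ i : ℕ, 0 < a i → 0 < d (i + r') :=
  stmt_16_general μ εX εY hmeasX hmeasY hindep hcontX X Y a b c d p s hp q r hrq δr hδr hsummable
    hXrep hYrep hstruct
end
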